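/- Suppose A ⊆ B ⊆ P(ω₁) where A is the finite-cofinite algebra on ω₁, and suppose ω₁ is partitioned into disjoint countably infinite sets S_ξ (ξ < ω₁) such that every b ∈ B \ A meets some S_ξ and its complement also meets that same S_ξ. Then Irr_mm(B) = ℵ₁. -/

import Mathlib

open Cardinal Set

universe u
variable {B : Type u} [BooleanAlgebra B]

/-- Membership in the boolean subalgebra of `B` generated by `E`. -/
inductive InGen (E : Set B) : B → Prop
  | base {a : B} : a ∈ E → InGen E a
  | bot : InGen E ⊥
  | compl {a : B} : InGen E a → InGen E aᶜ
  | sup {a b : B} : InGen E a → InGen E b → InGen E (a ⊔ b)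

/-- `E` is irredundant. -/
def Irred (E : Set B) : Prop := ∀ a ∈ E, ¬ InGen (E \ {a}) a

/-- `E` is independent. -/
def Indep (E : Set B) : Prop :=
  ∀ F G : Finset B, ↑F ⊆ E → ↑G ⊆ E → Disjoint F G →
    F.inf id ⊓ G.inf (fun a => aᶜ) ≠ ⊥

/-- `S` is dense in `B`. -/
def DenseSub (S : Set B) : Prop := ∀ b : B, b ≠ ⊥ → ∃ d ∈ S, d ≠ ⊥ ∧ d ≤ b

/-- pi-weight of `B`: least size of a dense subset. -/
noncomputable def piWeight (B : Type u) [BooleanAlgebra B] : Cardinal :=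
  sInf {c | ∃ S : Set B, DenseSub S ∧ #S = c}

/-- `E` is a maximal irredundant subset of `B`. -/
def MaxIrred (E : Set B) : Prop :=
  Irred E ∧ ∀ b : B, b ∉ E → ¬ Irred (insert b E)

/-- least size of a maximal irredundant subset of `B`. -/
noncomputable def irrMM (B : Type u) [BooleanAlgebra B] : Cardinal :=
  sInf {c | ∃ E : Set B, MaxIrred E ∧ #E = c}


/-- A fixed set of size ℵ₁ with its canonical well-order: "ω₁". -/
noncomputable def W : Type := (Cardinal.aleph 1).ord.ToType

noncomputable instance : LinearOrder W := inferInstanceAs (LinearOrder (Cardinal.aleph 1).ord.ToType)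

/-- The finite-cofinite algebra on ω₁. -/
def finCofin : Set (Set W) := {b | b.Finite ∨ bᶜ.Finite}

/-- `S` is (the underlying set of) a subalgebra of `P(ω₁)`. -/
def IsSubalg (S : Set (Set W)) : Prop :=
  ∅ ∈ S ∧ (∀ a ∈ S, aᶜ ∈ S) ∧ ∀ a ∈ S, ∀ b ∈ S, a ∪ b ∈ S

/-- `E` is a maximal irredundant subset of the subalgebra (with carrier) `Bs`. -/
def MaxIrredIn (Bs E : Set (Set W)) : Prop :=
  E ⊆ Bs ∧ Irred E ∧ ∀ b ∈ Bs, b ∉ E → ¬ Irred (insert b E)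

/-- `Irr_mm` of a subalgebra of `P(ω₁)` with carrier `Bs`. -/
noncomputable def irrMMIn (Bs : Set (Set W)) : Cardinal :=
  sInf {c | ∃ E, MaxIrredIn Bs E ∧ #E = c}

/-- pi-weight of a subalgebra of `P(ω₁)` with carrier `Bs`. -/
noncomputable def piIn (Bs : Set (Set W)) : Cardinal :=
  sInf {c | ∃ S, S ⊆ Bs ∧ (∀ b ∈ Bs, b ≠ ∅ → ∃ d ∈ S, d ≠ ∅ ∧ d ⊆ b) ∧ #S = c}

/-- `C` is a closed unbounded subset of ω₁. -/
def IsClubW (C : Set W) : Prop :=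
  (∀ α : W, ∃ β ∈ C, α < β) ∧
    ∀ α : W, (C ∩ Set.Iio α).Nonempty → IsLUB (C ∩ Set.Iio α) α → α ∈ C

/-- `α` and `β` lie in the same `C`-block. -/
def SameBlock (C : Set W) (α β : W) : Prop := ∀ γ ∈ C, (γ ≤ α ↔ γ ≤ β)

/-- `C` is a nice club: all of its blocks are infinite. -/
def NiceClub (C : Set W) : Prop := IsClubW C ∧ ∀ α : W, {β | SameBlock C α β}.Infinite

/-- `b` is a union of `C`-blocks. -/
def BlockUnion (C : Set W) (b : Set W) : Prop :=
  ∀ α β : W, SameBlock C α β → (α ∈ b ↔ β ∈ b)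

/-- `b` is blockish for `C`: both `b` and its complement are unions of ℵ₁ many `C`-blocks. -/
def Blockish (C : Set W) (b : Set W) : Prop :=
  BlockUnion C b ∧ ¬ b.Countable ∧ ¬ bᶜ.Countable

/-- eventual domination: `f α ≤ g α` except on a set of size `< ℵ₁`. -/
def EvDom (f g : W → W) : Prop := {α | ¬ f α ≤ g α}.Countable

/-- the bounding number 𝔟_{ω₁}. -/
noncomputable def bW : Cardinal :=
  sInf {c | ∃ F : Set (W → W), (∀ g, ∃ f ∈ F, ¬ EvDom f g) ∧ #F = c}

/-- the dominating number 𝔡_{ω₁}. -/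
noncomputable def dW : Cardinal :=
  sInf {c | ∃ F : Set (W → W), (∀ g, ∃ f ∈ F, EvDom g f) ∧ #F = c}

/-- `T` splits `X`. -/
def Splits (T X : Set W) : Prop := ¬ (X ∩ T).Countable ∧ ¬ (X \ T).Countable

/-- the reaping number 𝔯_{ω₁}. -/
noncomputable def rW : Cardinal :=
  sInf {c | ∃ R : Set (Set W), (∀ X ∈ R, ¬ X.Countable) ∧
    (∀ T : Set W, ∃ X ∈ R, ¬ Splits T X) ∧ #R = c}

/-- the nice club `C` strongly splits `R`. -/
def StrSplits (C : Set W) (R : Set (Set W)) : Prop :=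
  ∀ b : Set W, Blockish C b → ∀ X ∈ R, Splits b X

/-- the strong reaping number r̂_{ω₁}. -/
noncomputable def rHatW : Cardinal :=
  sInf {c | ∃ R : Set (Set W), (∀ X ∈ R, ¬ X.Countable) ∧
    (∀ C : Set W, NiceClub C → ¬ StrSplits C R) ∧ #R = c}

/-- a subalgebra of `P(ω₁)` is dichotomous iff none of its members is countably infinite. -/
def Dichot (Bs : Set (Set W)) : Prop := ∀ b ∈ Bs, ¬ (b.Countable ∧ b.Infinite)


/-! Identify ω₁ with ω₁ × ℕ so that the block `S ξ` becomes `{ξ} × ℕ`, and take the ℵ₁ initial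
segments `{ξ} × [0, n]`. The segment `{ξ} × [0, n]` is the only one separating `(ξ, n)` from
`(ξ, n + 1)`, so the family is irredundant; it generates every singleton, hence all of `A`.
A set `b ∈ B \ A` splits some block, hence separates two consecutive points `(ξ, k)` and
`(ξ, k + 1)`, and then `b` together with the other segments generates `{ξ} × [0, k]`: the family
is maximal.

Conversely, a countable family generates only countably many sets, so it misses some singleton
`{p}`; since `{p}` is an atom, adding it to an irredundant family keeps the family irredundant. -/

open scoped symmDiff

namespace InGen

variable {E F : Set B} {a b : B}

theorem mono (h : E ⊆ F) (ha : InGen E a) : InGen F a := by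
  induction ha with
  | base h' => exact base (h h')
  | bot => exact bot
  | compl _ ih => exact ih.compl
  | sup _ _ ih₁ ih₂ => exact ih₁.sup ih₂

theorem inf (ha : InGen E a) (hb : InGen E b) : InGen E (a ⊓ b) := by
  simpa using (ha.compl.sup hb.compl).compl

theorem sdiff (ha : InGen E a) (hb : InGen E b) : InGen E (a \ b) := by
  simpa [_root_.sdiff_eq] using ha.inf hb.compl

theorem symmDiff (ha : InGen E a) (hb : InGen E b) : InGen E (a ∆ b) :=
  (ha.sdiff hb).sup (hb.sdiff ha)

theorem exists_sdiff_eq_of_insert (ha : InGen (insert b F) a) :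
    ∃ d, InGen F d ∧ a \ b = d \ b := by
  induction ha with
  | base h =>
    rcases h with rfl | h
    · exact ⟨⊥, bot, by simp⟩
    · exact ⟨_, base h, rfl⟩
  | bot => exact ⟨⊥, bot, rfl⟩
  | @compl a _ ih =>
    obtain ⟨d, hd, had⟩ := ih
    refine ⟨dᶜ, hd.compl, ?_⟩
    calc aᶜ \ b = (a \ b ⊔ b)ᶜ := by rw [sdiff_sup_self, _root_.sdiff_eq, compl_sup]
      _ = dᶜ \ b := by rw [had, sdiff_sup_self, _root_.sdiff_eq, compl_sup]
  | sup _ _ ih₁ ih₂ =>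
    obtain ⟨d₁, hd₁, h₁⟩ := ih₁
    obtain ⟨d₂, hd₂, h₂⟩ := ih₂
    exact ⟨d₁ ⊔ d₂, hd₁.sup hd₂, by rw [sup_sdiff, sup_sdiff, h₁, h₂]⟩

theorem mem_iff_of_forall_mem_iff {α : Type*} {E : Set (Set α)} {x y : α}
    (h : ∀ g ∈ E, (x ∈ g ↔ y ∈ g)) {g : Set α} (hg : InGen E g) : x ∈ g ↔ y ∈ g := by
  induction hg with
  | base h' => exact h _ h'
  | bot => simp
  | compl _ ih => simp [ih]
  | sup _ _ ih₁ ih₂ => simp [ih₁, ih₂]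

theorem of_finite {α : Type*} {E : Set (Set α)} (h : ∀ x : α, InGen E {x}) {s : Set α}
    (hs : s.Finite) : InGen E s := by
  induction s, hs using Set.Finite.induction_on with
  | empty => exact bot
  | insert _ _ ih => exact (h _).sup ih

end InGen

theorem Irred.insert_of_isAtom {E : Set B} {b : B} (hE : Irred E) (hb : IsAtom b)
    (hbE : ¬ InGen E b) : Irred (insert b E) := by
  rintro a (rfl | haE) ha
  · exact hbE (ha.mono (sdiff_singleton_subset_iff.2 subset_rfl))
  have hab : a ≠ b := by rintro rfl; exact hbE (.base haE)
  rw [insert_sdiff_of_notMem _ (by simpa using hab.symm)] at ha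
  obtain ⟨d, hd, had⟩ := ha.exists_sdiff_eq_of_insert
  have hsup : a ⊔ b = d ⊔ b := by rw [← sdiff_sup_self, had, sdiff_sup_self]
  have hle : a ∆ d ≤ b := symmDiff_le (hsup ▸ le_sup_left) (hsup ▸ le_sup_left)
  rcases hb.le_iff.1 hle with h | h
  · exact hE a haE (symmDiff_eq_bot.1 h ▸ hd)
  · exact hbE (h ▸ (InGen.base haE).symmDiff (hd.mono sdiff_subset))

theorem countable_setOf_inGen {E : Set B} (hE : E.Countable) : {a | InGen E a}.Countable := by
  let step : Set B → Set B := fun T => T ∪ compl '' T ∪ image2 (· ⊔ ·) T T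
  let stage : ℕ → Set B := fun n => step^[n] (insert ⊥ E)
  have stage_succ : ∀ n, stage (n + 1) = step (stage n) := fun n =>
    Function.iterate_succ_apply' step n _
  have hcount : ∀ n, (stage n).Countable := by
    intro n
    induction n with
    | zero => exact hE.insert ⊥
    | succ n ih => rw [stage_succ]; exact (ih.union (ih.image _)).union (ih.image2 ih _)
  have hmono : Monotone stage := monotone_nat_of_le_succ fun n => by
    rw [stage_succ]; exact subset_union_left.trans subset_union_left
  refine (countable_iUnion hcount).mono fun a ha => mem_iUnion.2 ?_
  induction ha with
  | base h => exact ⟨0, mem_insert_of_mem _ h⟩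
  | bot => exact ⟨0, mem_insert _ _⟩
  | compl _ ih =>
    obtain ⟨n, hn⟩ := ih
    exact ⟨n + 1, by rw [stage_succ]; exact Or.inl (Or.inr ⟨_, hn, rfl⟩)⟩
  | sup _ _ ih₁ ih₂ =>
    obtain ⟨n, hn⟩ := ih₁
    obtain ⟨m, hm⟩ := ih₂
    refine ⟨max n m + 1, ?_⟩
    rw [stage_succ]
    exact Or.inr (mem_image2_of_mem (hmono (le_max_left n m) hn) (hmono (le_max_right n m) hm))

theorem Nat.exists_not_iff_succ {p : ℕ → Prop} {m n : ℕ} (hm : p m) (hn : ¬ p n) :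
    ∃ k, ¬ (p k ↔ p (k + 1)) := by
  by_contra! h
  have hconst : ∀ k, p k ↔ p 0 := fun k => by
    induction k with
    | zero => rfl
    | succ k ih => exact (h k).symm.trans ih
  exact hn ((hconst n).2 ((hconst m).1 hm))

section BlockSegment

variable {α ι : Type*} (e : α ≃ ι × ℕ) {i j : ι} {k m n : ℕ}

def blockSegment (i : ι) (n : ℕ) : Set α := e ⁻¹' ({i} ×ˢ Iio n)

def blockSegments : Set (Set α) := range fun p : ι × ℕ => blockSegment e p.1 (p.2 + 1)

theorem symm_mem_blockSegment : e.symm (j, m) ∈ blockSegment e i n ↔ j = i ∧ m < n := by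
  simp [blockSegment]

theorem blockSegment_zero : blockSegment e i 0 = ∅ := by
  simp [blockSegment]

theorem finite_blockSegment : (blockSegment e i n).Finite :=
  ((finite_singleton i).prod (finite_Iio n)).preimage e.injective.injOn

theorem blockSegment_mem_blockSegments (hn : n ≠ 0) : blockSegment e i n ∈ blockSegments e :=
  ⟨(i, n - 1), by simp [Nat.sub_add_cancel (Nat.one_le_iff_ne_zero.2 hn)]⟩

theorem blockSegment_eq_iff (hn : n ≠ 0) :
    blockSegment e j n = blockSegment e i k ↔ j = i ∧ n = k := by
  refine ⟨fun h => ?_, by rintro ⟨rfl, rfl⟩; rfl⟩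
  obtain ⟨rfl, hk⟩ := (symm_mem_blockSegment e).1
    (h ▸ (symm_mem_blockSegment e).2 ⟨rfl, Nat.pos_of_ne_zero hn⟩)
  have h₁ := (symm_mem_blockSegment e).1
    (h ▸ (symm_mem_blockSegment e (j := j) (m := n - 1)).2 ⟨rfl, by omega⟩)
  have h₂ := (symm_mem_blockSegment e).1
    (h.symm ▸ (symm_mem_blockSegment e (j := j) (m := k - 1)).2 ⟨rfl, by omega⟩)
  exact ⟨rfl, by omega⟩

theorem blockSegment_succ_sdiff :
    blockSegment e i (n + 1) \ blockSegment e i n = {e.symm (i, n)} := by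
  ext x
  rw [← e.symm_apply_apply x]
  obtain ⟨j, m⟩ := e x
  simp only [mem_sdiff, symm_mem_blockSegment, mem_singleton_iff, e.symm.injective.eq_iff,
    Prod.mk.injEq]
  grind

theorem blockSegment_succ_eq_union_inter {c : Set α} (hk : e.symm (i, k) ∈ c)
    (hk' : e.symm (i, k + 1) ∉ c) :
    blockSegment e i (k + 1) = blockSegment e i k ∪ (blockSegment e i (k + 2) ∩ c) := by
  ext x
  rw [← e.symm_apply_apply x]
  obtain ⟨j, m⟩ := e x
  simp only [mem_union, mem_inter_iff, symm_mem_blockSegment]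
  grind

theorem inGen_blockSegment {F : Set (Set α)} (h : n ≠ 0 → blockSegment e i n ∈ F) :
    InGen F (blockSegment e i n) := by
  rcases eq_or_ne n 0 with rfl | hn
  · rw [blockSegment_zero]
    exact .bot
  · exact .base (h hn)

theorem inGen_blockSegments_singleton (x : α) : InGen (blockSegments e) {x} := by
  rw [← e.symm_apply_apply x, ← blockSegment_succ_sdiff]
  exact (InGen.base (blockSegment_mem_blockSegments e (e x).2.succ_ne_zero)).sdiff
    (inGen_blockSegment e (blockSegment_mem_blockSegments e))

theorem irred_blockSegments : Irred (blockSegments e) := by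
  rintro _ ⟨⟨i, n⟩, rfl⟩ ha
  have key := ha.mem_iff_of_forall_mem_iff (x := e.symm (i, n)) (y := e.symm (i, n + 1)) ?_
  · simp [symm_mem_blockSegment] at key
  · rintro _ ⟨⟨⟨j, m⟩, rfl⟩, hne⟩
    rw [mem_singleton_iff, blockSegment_eq_iff e m.succ_ne_zero] at hne
    simp only [symm_mem_blockSegment]
    grind

theorem inGen_sdiff_blockSegment_of_separates {b : Set α} (hb : b ≠ blockSegment e i (k + 1))
    (hsep : ¬ (e.symm (i, k) ∈ b ↔ e.symm (i, k + 1) ∈ b)) :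
    InGen (insert b (blockSegments e) \ {blockSegment e i (k + 1)}) (blockSegment e i (k + 1)) := by
  set F := insert b (blockSegments e) \ {blockSegment e i (k + 1)}
  have hseg : ∀ n ≠ k + 1, InGen F (blockSegment e i n) := fun n hnk =>
    inGen_blockSegment e fun hn => ⟨mem_insert_of_mem _ (blockSegment_mem_blockSegments e hn),
      by simpa [blockSegment_eq_iff e hn] using hnk⟩
  have hbF : InGen F b := .base ⟨mem_insert _ _, hb⟩
  by_cases hbk : e.symm (i, k) ∈ b
  · convert (hseg k (by omega)).sup ((hseg (k + 2) (by omega)).inf hbF) using 1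
    exact blockSegment_succ_eq_union_inter e hbk (by tauto)
  · convert (hseg k (by omega)).sup ((hseg (k + 2) (by omega)).inf hbF.compl) using 1
    exact blockSegment_succ_eq_union_inter e (c := bᶜ) hbk
      (by simpa using (not_iff.1 hsep).1 hbk)

theorem not_irred_insert_blockSegments {b : Set α} (hb : b ∉ blockSegments e) {x y : α}
    (hx : x ∈ b) (hy : y ∉ b) (hxy : (e x).1 = (e y).1) :
    ¬ Irred (insert b (blockSegments e)) := by
  obtain ⟨k, hk⟩ := Nat.exists_not_iff_succ (p := fun k => e.symm ((e x).1, k) ∈ b)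
    (m := (e x).2) (n := (e y).2) (by simpa) (by simpa [hxy])
  have hne : b ≠ blockSegment e (e x).1 (k + 1) := fun h =>
    hb (h ▸ blockSegment_mem_blockSegments e k.succ_ne_zero)
  exact fun hirr => hirr _ (mem_insert_of_mem _ ⟨((e x).1, k), rfl⟩)
    (inGen_sdiff_blockSegment_of_separates e hne hk)

theorem mk_blockSegments : #(blockSegments e) = #α :=
  Cardinal.mk_congr ((Equiv.ofInjective _ fun p q h =>
    have h' := (blockSegment_eq_iff e p.2.succ_ne_zero).1 h
    Prod.ext h'.1 (by omega)).symm.trans e.symm)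

end BlockSegment

theorem exists_equiv_prod_nat {α ι : Type*} (S : ι → Set α)
    (hdisj : Pairwise (Function.onFun Disjoint S))
    (hcount : ∀ i, (S i).Countable ∧ (S i).Infinite) (hcover : ⋃ i, S i = Set.univ) :
    ∃ e : α ≃ ι × ℕ, ∀ x i, x ∈ S i ↔ (e x).1 = i := by
  have hS : ∀ i, Nonempty (S i ≃ ℕ) := fun i =>
    have := (hcount i).1.to_subtype
    have := (hcount i).2.to_subtype
    nonempty_equiv_of_countable
  let u := (Equiv.Set.univ α).symm.trans ((Equiv.setCongr hcover.symm).trans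
    (unionEqSigmaOfDisjoint hdisj))
  have hmem : ∀ x, x ∈ S (u x).1 := fun x => by
    simpa [u] using (u x).2.2
  refine ⟨u.trans ((Equiv.sigmaCongrRight fun i => (hS i).some).trans (Equiv.sigmaEquivProd ι ℕ)),
    fun x i => ⟨fun hx => ?_, ?_⟩⟩
  · by_contra hne
    exact disjoint_left.1 (hdisj hne) (hmem x) hx
  · rintro rfl
    exact hmem x

theorem MaxIrredIn.not_countable {Bs E : Set (Set W)} (hE : MaxIrredIn Bs E)
    (hA : ∀ p : W, {p} ∈ Bs) : ¬ E.Countable := by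
  intro hcount
  have hW : ¬ (univ : Set W).Countable := by
    rw [countable_univ_iff, ← Cardinal.mk_le_aleph0_iff, W, mk_ord_toType, not_le]
    exact aleph0_lt_aleph_one
  obtain ⟨p, hp⟩ : ∃ p : W, ¬ InGen E {p} := by
    by_contra! h
    exact hW (((countable_setOf_inGen hcount).preimage singleton_injective).mono fun p _ => h p)
  exact hE.2.2 _ (hA p) (fun h => hp (.base h)) (hE.2.1.insert_of_isAtom (isAtom_singleton p) hp)

theorem maxIrredIn_blockSegments {Bs : Set (Set W)} (e : W ≃ W × ℕ) (hA : finCofin ⊆ Bs)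
    (hsplit : ∀ b ∈ Bs, b ∉ finCofin → ∃ x ∈ b, ∃ y ∉ b, (e x).1 = (e y).1) :
    MaxIrredIn Bs (blockSegments e) := by
  refine ⟨?_, irred_blockSegments e, fun b hb hbE => ?_⟩
  · rintro _ ⟨p, rfl⟩
    exact hA (Or.inl (finite_blockSegment e))
  by_cases hbA : b ∈ finCofin
  · refine fun hirr => hirr b (mem_insert _ _) ?_
    rw [insert_sdiff_self_of_notMem hbE]
    have hgen {s : Set W} := InGen.of_finite (s := s) (inGen_blockSegments_singleton e)
    rcases hbA with hfin | hcofin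
    · exact hgen hfin
    · simpa using (hgen hcofin).compl
  · obtain ⟨x, hx, y, hy, hxy⟩ := hsplit b hb hbA
    exact not_irred_insert_blockSegments e hbE hx hy hxy

theorem irrMM_of_splitting_partition_general (Bs : Set (Set W))
    (hA : finCofin ⊆ Bs)
    (S : W → Set W) (hdisj : Pairwise (Function.onFun Disjoint S))
    (hcount : ∀ ξ : W, (S ξ).Countable ∧ (S ξ).Infinite)
    (hcover : (⋃ ξ : W, S ξ) = Set.univ)
    (hsplit : ∀ b ∈ Bs, b ∉ finCofin →
      ∃ ξ : W, (S ξ ∩ b).Nonempty ∧ (S ξ \ b).Nonempty) :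
    irrMMIn Bs = Cardinal.aleph 1 := by
  obtain ⟨e, he⟩ := exists_equiv_prod_nat S hdisj hcount hcover
  have hmax : MaxIrredIn Bs (blockSegments e) := maxIrredIn_blockSegments e hA fun b hb hbA => by
    obtain ⟨ξ, ⟨x, hxS, hx⟩, ⟨y, hyS, hy⟩⟩ := hsplit b hb hbA
    exact ⟨x, hx, y, hy, ((he x ξ).1 hxS).trans ((he y ξ).1 hyS).symm⟩
  have hcard : #(blockSegments e) = aleph 1 := (mk_blockSegments e).trans (mk_ord_toType _)
  refine le_antisymm (csInf_le' ⟨_, hmax, hcard⟩) (le_csInf ⟨_, _, hmax, hcard⟩ ?_)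
  rintro _ ⟨E, hE, rfl⟩
  rw [aleph_one_le_iff, lt_iff_not_ge, le_aleph0_iff_set_countable]
  exact hE.not_countable fun p => hA (Or.inl (finite_singleton p))

theorem irrMM_of_splitting_partition (Bs : Set (Set W))
    (hsub : IsSubalg Bs) (hA : finCofin ⊆ Bs)
    (S : W → Set W) (hdisj : Pairwise (Function.onFun Disjoint S))
    (hcount : ∀ ξ : W, (S ξ).Countable ∧ (S ξ).Infinite)
    (hcover : (⋃ ξ : W, S ξ) = Set.univ)
    (hsplit : ∀ b ∈ Bs, b ∉ finCofin →
      ∃ ξ : W, (S ξ ∩ b).Nonempty ∧ (S ξ \ b).Nonempty) :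
    irrMMIn Bs = Cardinal.aleph 1 :=
  irrMM_of_splitting_partition_general Bs hA S hdisj hcount hcover hsplit
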